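/- arXiv:2411.05661 — 5 statements merged into one kernel-verified Lean document; each statement's English description precedes it below -/
import Mathlib

section
/- Let Y be an integrable real random variable, M a discrete random variable, A a random variable, and O an indicator in {0,1} with O independent of Y given (A, M). Suppose P(O=1 | M=m, A=a) > 0 for all m. Then E[Y | A=a] = E[ E[Y | M, A=a, O=1] | A=a ], i.e., the mean reward is identified from data conditional on O=1 (MAR identification). -/
open scoped BigOperators Classical

/-- Probability of the event `S` under the weight function `p` on a finite sample space. -/
noncomputable def Pr {Ω : Type*} [Fintype Ω] (p : Ω → ℝ) (S : Ω → Prop) : ℝ :=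
  ∑ ω, if S ω then p ω else 0

/-- Conditional probability `P(S | T)` (by convention `0` if `P(T) = 0`). -/
noncomputable def CPr {Ω : Type*} [Fintype Ω] (p : Ω → ℝ) (S T : Ω → Prop) : ℝ :=
  Pr p (fun ω => S ω ∧ T ω) / Pr p T

/-- Conditional expectation `E[Y | S]` (by convention `0` if `P(S) = 0`). -/
noncomputable def CExp {Ω : Type*} [Fintype Ω] (p : Ω → ℝ) (Y : Ω → ℝ) (S : Ω → Prop) : ℝ :=
  (∑ ω, if S ω then p ω * Y ω else 0) / Pr p S

/-- Unnormalized conditional expectation numerator. -/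
noncomputable def SE {Ω : Type*} [Fintype Ω] (p : Ω → ℝ) (Y : Ω → ℝ) (S : Ω → Prop) : ℝ :=
  ∑ ω, if S ω then p ω * Y ω else 0

section helpers
variable {Ω : Type*} [Fintype Ω] (p : Ω → ℝ)

lemma CExp_eq (Y : Ω → ℝ) (S : Ω → Prop) : CExp p Y S = SE p Y S / Pr p S := rfl

lemma Pr_congr {S T : Ω → Prop} (h : ∀ ω, S ω ↔ T ω) : Pr p S = Pr p T := by
  unfold Pr; exact Finset.sum_congr rfl fun ω _ => by simp [h ω]

lemma Pr_nonneg (hp0 : ∀ ω, 0 ≤ p ω) (S : Ω → Prop) : 0 ≤ Pr p S :=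
  Finset.sum_nonneg fun ω _ => by split <;> simp [hp0 ω]

lemma Pr_zero (hp0 : ∀ ω, 0 ≤ p ω) {S : Ω → Prop} (h : Pr p S = 0) :
    ∀ ω, S ω → p ω = 0 := by
  intro ω hω
  have hnn : ∀ x ∈ Finset.univ, 0 ≤ if S x then p x else 0 := by
    intro x _; split <;> simp [hp0 x]
  have := (Finset.sum_eq_zero_iff_of_nonneg hnn).mp h ω (Finset.mem_univ ω)
  simpa [hω] using this

lemma SE_zero (hp0 : ∀ ω, 0 ≤ p ω) (Y : Ω → ℝ) {S : Ω → Prop} (h : Pr p S = 0) :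
    SE p Y S = 0 := by
  unfold SE
  refine Finset.sum_eq_zero fun ω _ => ?_
  by_cases hS : S ω
  · simp [hS, Pr_zero p hp0 h ω hS]
  · simp [hS]

lemma sum_y (Y : Ω → ℝ) (E : Ω → Prop) :
    ∑ y ∈ Finset.image Y Finset.univ, y * Pr p (fun ω => Y ω = y ∧ E ω)
      = SE p Y E := by
  unfold Pr SE
  simp_rw [Finset.mul_sum]
  rw [Finset.sum_comm]
  refine Finset.sum_congr rfl fun ω _ => ?_
  by_cases hE : E ω
  · rw [Finset.sum_eq_single (Y ω)]
    · simp [hE, mul_comm]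
    · intro b _ hb; simp [hb.symm]
    · intro hmem; exact absurd (Finset.mem_image_of_mem Y (Finset.mem_univ ω)) hmem
  · simp [hE]

lemma SE_split {𝓜 𝓐 : Type*} [Fintype 𝓜] (Y : Ω → ℝ) (M : Ω → 𝓜) (A : Ω → 𝓐) (a : 𝓐) :
    SE p Y (fun ω => A ω = a) = ∑ m : 𝓜, SE p Y (fun ω => M ω = m ∧ A ω = a) := by
  unfold SE
  rw [Finset.sum_comm]
  refine Finset.sum_congr rfl fun ω _ => ?_
  by_cases h : A ω = a
  · rw [Finset.sum_eq_single (M ω)]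
    · simp [h]
    · intro b _ hb
      have : ¬ (M ω = b ∧ A ω = a) := fun hh => hb hh.1.symm
      simp [this]
    · simp
  · simp [h]

lemma arith (Sam S1 Pam P1 Pa : ℝ) (hPa : 0 < Pa) (hPam : 0 ≤ Pam)
    (hkey : S1 * Pam = P1 * Sam)
    (hSam0 : Pam = 0 → Sam = 0)
    (hP1pos : 0 < Pam → 0 < P1) :
    Sam / Pa = (Pam / Pa) * (S1 / P1) := by
  rcases eq_or_lt_of_le hPam with h | h
  · rw [hSam0 h.symm, ← h]; simp
  · have hP1 := hP1pos h
    field_simp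
    nlinarith [hkey]

end helpers

/-- **MAR identification.** On a (finite) probability space, let `Y` be a real random
variable, `M` a discrete (finite-valued) mediator, `A` an action, and `O ∈ {0,1}` a
missingness indicator with `O ⟂ Y | (A, M)`.  If `P(O=1 | M=m, A=a) > 0` for every `m`
with `P(M=m | A=a) > 0`, then
`E[Y | A=a] = E[ E[Y | M, A=a, O=1] | A=a ]`. -/
theorem mar_identification
    {Ω 𝓐 𝓜 : Type*} [Fintype Ω] [Fintype 𝓜]
    (p : Ω → ℝ) (hp0 : ∀ ω, 0 ≤ p ω) (hp1 : ∑ ω, p ω = 1)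
    (Y : Ω → ℝ) (M : Ω → 𝓜) (A : Ω → 𝓐) (O : Ω → ℕ)
    (hO : ∀ ω, O ω = 0 ∨ O ω = 1)
    -- conditional independence O ⟂ Y | (A, M)
    (hCI : ∀ (o : ℕ) (y : ℝ) (a : 𝓐) (m : 𝓜),
      Pr p (fun ω => O ω = o ∧ Y ω = y ∧ A ω = a ∧ M ω = m) *
        Pr p (fun ω => A ω = a ∧ M ω = m)
      = Pr p (fun ω => O ω = o ∧ A ω = a ∧ M ω = m) *
        Pr p (fun ω => Y ω = y ∧ A ω = a ∧ M ω = m))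
    (a : 𝓐) (hA : 0 < Pr p (fun ω => A ω = a))
    -- positivity: P(O=1 | M=m, A=a) > 0 whenever P(M=m | A=a) > 0
    (hpos : ∀ m : 𝓜, 0 < CPr p (fun ω => M ω = m) (fun ω => A ω = a) →
      0 < CPr p (fun ω => O ω = 1) (fun ω => M ω = m ∧ A ω = a)) :
    CExp p Y (fun ω => A ω = a)
      = ∑ m : 𝓜, CPr p (fun ω => M ω = m) (fun ω => A ω = a) *
          CExp p Y (fun ω => M ω = m ∧ A ω = a ∧ O ω = 1) := by
  classical
  have key : ∀ m : 𝓜,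
      SE p Y (fun ω => M ω = m ∧ A ω = a) / Pr p (fun ω => A ω = a)
      = CPr p (fun ω => M ω = m) (fun ω => A ω = a) *
          CExp p Y (fun ω => M ω = m ∧ A ω = a ∧ O ω = 1) := by
    intro m
    rw [CExp_eq]
    have hCPr : CPr p (fun ω => M ω = m) (fun ω => A ω = a)
        = Pr p (fun ω => M ω = m ∧ A ω = a) / Pr p (fun ω => A ω = a) := rfl
    rw [hCPr]
    have hy : ∀ y : ℝ,
        Pr p (fun ω => Y ω = y ∧ (M ω = m ∧ A ω = a ∧ O ω = 1)) *
          Pr p (fun ω => M ω = m ∧ A ω = a)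
        = Pr p (fun ω => M ω = m ∧ A ω = a ∧ O ω = 1) *
            Pr p (fun ω => Y ω = y ∧ (M ω = m ∧ A ω = a)) := by
      intro y
      have h := hCI 1 y a m
      have e1 : Pr p (fun ω => O ω = 1 ∧ Y ω = y ∧ A ω = a ∧ M ω = m)
          = Pr p (fun ω => Y ω = y ∧ (M ω = m ∧ A ω = a ∧ O ω = 1)) :=
        Pr_congr p (fun ω => by tauto)
      have e2 : Pr p (fun ω => A ω = a ∧ M ω = m)
          = Pr p (fun ω => M ω = m ∧ A ω = a) :=
        Pr_congr p (fun ω => by tauto)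
      have e3 : Pr p (fun ω => O ω = 1 ∧ A ω = a ∧ M ω = m)
          = Pr p (fun ω => M ω = m ∧ A ω = a ∧ O ω = 1) :=
        Pr_congr p (fun ω => by tauto)
      have e4 : Pr p (fun ω => Y ω = y ∧ A ω = a ∧ M ω = m)
          = Pr p (fun ω => Y ω = y ∧ (M ω = m ∧ A ω = a)) :=
        Pr_congr p (fun ω => by tauto)
      rw [e1, e2, e3, e4] at h
      exact h
    have hkey : SE p Y (fun ω => M ω = m ∧ A ω = a ∧ O ω = 1) *
          Pr p (fun ω => M ω = m ∧ A ω = a)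
        = Pr p (fun ω => M ω = m ∧ A ω = a ∧ O ω = 1) *
            SE p Y (fun ω => M ω = m ∧ A ω = a) := by
      rw [← sum_y p Y (fun ω => M ω = m ∧ A ω = a ∧ O ω = 1),
          ← sum_y p Y (fun ω => M ω = m ∧ A ω = a),
          Finset.sum_mul, Finset.mul_sum]
      refine Finset.sum_congr rfl fun y _ => ?_
      rw [mul_assoc, hy y, mul_left_comm]
    refine arith _ _ _ _ _ hA (Pr_nonneg p hp0 _) hkey ?_ ?_
    · intro hPam
      exact SE_zero p hp0 Y hPam
    · intro hPam
      have hcpos : 0 < CPr p (fun ω => M ω = m) (fun ω => A ω = a) := by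
        rw [hCPr]; exact div_pos hPam hA
      have h1 := hpos m hcpos
      have h2 : CPr p (fun ω => O ω = 1) (fun ω => M ω = m ∧ A ω = a)
          = Pr p (fun ω => M ω = m ∧ A ω = a ∧ O ω = 1) /
              Pr p (fun ω => M ω = m ∧ A ω = a) := by
        unfold CPr
        rw [Pr_congr p (S := fun ω => O ω = 1 ∧ (M ω = m ∧ A ω = a))
          (T := fun ω => M ω = m ∧ A ω = a ∧ O ω = 1) (fun ω => by tauto)]
      rw [h2] at h1
      have := mul_pos h1 hPam
      rwa [div_mul_cancel₀ _ (ne_of_gt hPam)] at this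
  rw [CExp_eq, SE_split p Y M A a, Finset.sum_div]
  exact Finset.sum_congr rfl fun m _ => key m
end

section
/- Suppose O^M ⟂ M | A and O^M ⟂ Y | (A, M, O^Y), together with the MAR assumption O^Y ⟂ Y | (A, M). Then E[Y | A=a] = E[ E[Y | M, A=a, O^Y=1, O^M=1] | A=a, O^M=1 ], assuming all conditioning events have positive probability. -/
open scoped BigOperators Classical

section Aux

variable {Ω : Type*} [Fintype Ω] (p : Ω → ℝ)

lemma Pr_mono (hp0 : ∀ ω, 0 ≤ p ω) {S T : Ω → Prop} (h : ∀ ω, S ω → T ω) :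
    Pr p S ≤ Pr p T :=
  Finset.sum_le_sum fun ω _ => by
    by_cases hs : S ω
    · simp [hs, h ω hs]
    · by_cases ht : T ω <;> simp [hs, ht, hp0 ω]

lemma CExp_congr (Y : Ω → ℝ) {S T : Ω → Prop} (h : ∀ ω, S ω ↔ T ω) :
    CExp p Y S = CExp p Y T := by
  unfold CExp
  rw [Pr_congr p h]
  congr 1
  exact Finset.sum_congr rfl fun ω _ => by simp only [h ω]

lemma cpr_pos (hp0 : ∀ ω, 0 ≤ p ω) {S T : Ω → Prop} (h : 0 < CPr p S T) :
    0 < Pr p (fun ω => S ω ∧ T ω) ∧ 0 < Pr p T := by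
  have hT : 0 < Pr p T := by
    rcases (Pr_nonneg p hp0 T).lt_or_eq with hT | hT
    · exact hT
    · exfalso; rw [CPr, ← hT, div_zero] at h; exact lt_irrefl 0 h
  refine ⟨?_, hT⟩
  have h2 := mul_pos h hT
  rwa [CPr, div_mul_cancel₀ _ hT.ne'] at h2

lemma sum_w_eq (Y : Ω → ℝ) (S : Ω → Prop) :
    (∑ ω, if S ω then p ω * Y ω else 0)
      = ∑ y ∈ Finset.image Y Finset.univ, y * Pr p (fun ω => Y ω = y ∧ S ω) := by
  unfold Pr
  simp only [Finset.mul_sum, mul_ite, mul_zero]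
  rw [Finset.sum_comm]
  refine Finset.sum_congr rfl fun ω _ => ?_
  by_cases hS : S ω
  · simp only [hS, and_true]
    rw [Finset.sum_ite_eq]
    simp [mul_comm]
  · simp [hS]

lemma key_factor (Y : Ω → ℝ) {S T : Ω → Prop} {c d : ℝ}
    (h : ∀ y, Pr p (fun ω => Y ω = y ∧ S ω) * c = d * Pr p (fun ω => Y ω = y ∧ T ω)) :
    (∑ ω, if S ω then p ω * Y ω else 0) * c
      = d * (∑ ω, if T ω then p ω * Y ω else 0) := by
  rw [sum_w_eq p Y S, sum_w_eq p Y T, Finset.sum_mul, Finset.mul_sum]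
  refine Finset.sum_congr rfl fun y _ => ?_
  rw [mul_assoc, h y]
  ring

lemma cexp_trans (Y : Ω → ℝ) {S T : Ω → Prop} (hS : 0 < Pr p S) (hT : 0 < Pr p T)
    (h : (∑ ω, if S ω then p ω * Y ω else 0) * Pr p T
        = Pr p S * (∑ ω, if T ω then p ω * Y ω else 0)) :
    CExp p Y S = CExp p Y T := by
  unfold CExp
  rw [div_eq_div_iff hS.ne' hT.ne', h, mul_comm]

lemma partition {𝓜 : Type*} [Fintype 𝓜] (M : Ω → 𝓜) (f : Ω → ℝ) (S : Ω → Prop) :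
    (∑ ω, if S ω then f ω else 0)
      = ∑ m, ∑ ω, if S ω ∧ M ω = m then f ω else 0 := by
  rw [Finset.sum_comm]
  refine Finset.sum_congr rfl fun ω _ => ?_
  by_cases hS : S ω
  · simp only [hS, true_and]
    rw [Finset.sum_ite_eq]
    simp
  · simp [hS]

end Aux

/-- **Identification with a missing-at-random mediator and MAR outcome.** Assuming
`O^Y ⟂ Y | (A, M)`, `O^M ⟂ M | A` and `O^M ⟂ Y | (A, M, O^Y)`, with positivity of the
relevant conditioning events,
`E[Y | A=a] = E[ E[Y | M, A=a, O^Y=1, O^M=1] | A=a, O^M=1 ]`. -/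
theorem mar_mediator_identification
    {Ω 𝓐 𝓜 : Type*} [Fintype Ω] [Fintype 𝓜]
    (p : Ω → ℝ) (hp0 : ∀ ω, 0 ≤ p ω) (hp1 : ∑ ω, p ω = 1)
    (Y : Ω → ℝ) (M : Ω → 𝓜) (A : Ω → 𝓐) (OY OM : Ω → ℕ)
    (hOY : ∀ ω, OY ω = 0 ∨ OY ω = 1) (hOM : ∀ ω, OM ω = 0 ∨ OM ω = 1)
    -- O^Y ⟂ Y | (A, M)
    (hCI1 : ∀ (o : ℕ) (y : ℝ) (a : 𝓐) (m : 𝓜),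
      Pr p (fun ω => OY ω = o ∧ Y ω = y ∧ A ω = a ∧ M ω = m) *
        Pr p (fun ω => A ω = a ∧ M ω = m)
      = Pr p (fun ω => OY ω = o ∧ A ω = a ∧ M ω = m) *
        Pr p (fun ω => Y ω = y ∧ A ω = a ∧ M ω = m))
    -- O^M ⟂ M | A
    (hCI2 : ∀ (o : ℕ) (m : 𝓜) (a : 𝓐),
      Pr p (fun ω => OM ω = o ∧ M ω = m ∧ A ω = a) * Pr p (fun ω => A ω = a)
      = Pr p (fun ω => OM ω = o ∧ A ω = a) * Pr p (fun ω => M ω = m ∧ A ω = a))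
    -- O^M ⟂ Y | (A, M, O^Y)
    (hCI3 : ∀ (o oy : ℕ) (y : ℝ) (a : 𝓐) (m : 𝓜),
      Pr p (fun ω => OM ω = o ∧ Y ω = y ∧ A ω = a ∧ M ω = m ∧ OY ω = oy) *
        Pr p (fun ω => A ω = a ∧ M ω = m ∧ OY ω = oy)
      = Pr p (fun ω => OM ω = o ∧ A ω = a ∧ M ω = m ∧ OY ω = oy) *
        Pr p (fun ω => Y ω = y ∧ A ω = a ∧ M ω = m ∧ OY ω = oy))
    (a : 𝓐)
    -- positivity
    (hpos : ∀ m : 𝓜,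
      0 < CPr p (fun ω => OY ω = 1 ∧ OM ω = 1 ∧ M ω = m) (fun ω => A ω = a))
    (hposM : 0 < CPr p (fun ω => OM ω = 1) (fun ω => A ω = a)) :
    CExp p Y (fun ω => A ω = a)
      = ∑ m : 𝓜,
          CPr p (fun ω => M ω = m) (fun ω => A ω = a ∧ OM ω = 1) *
            CExp p Y (fun ω => M ω = m ∧ A ω = a ∧ OY ω = 1 ∧ OM ω = 1) := by
  have hA : 0 < Pr p (fun ω => A ω = a) := (cpr_pos p hp0 hposM).2
  have hOMA : 0 < Pr p (fun ω => OM ω = 1 ∧ A ω = a) := (cpr_pos p hp0 hposM).1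
  have key : ∀ m : 𝓜,
      CPr p (fun ω => M ω = m) (fun ω => A ω = a ∧ OM ω = 1) *
        CExp p Y (fun ω => M ω = m ∧ A ω = a ∧ OY ω = 1 ∧ OM ω = 1)
      = (∑ ω, if A ω = a ∧ M ω = m then p ω * Y ω else 0) /
          Pr p (fun ω => A ω = a) := by
    intro m
    obtain ⟨hnum, -⟩ := cpr_pos p hp0 (hpos m)
    have h4 : 0 < Pr p (fun ω => M ω = m ∧ A ω = a ∧ OY ω = 1 ∧ OM ω = 1) := by
      have e : Pr p (fun ω => M ω = m ∧ A ω = a ∧ OY ω = 1 ∧ OM ω = 1)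
          = Pr p (fun ω => (OY ω = 1 ∧ OM ω = 1 ∧ M ω = m) ∧ A ω = a) :=
        Pr_congr p fun ω => by tauto
      rw [e]; exact hnum
    have hOM4 : 0 < Pr p (fun ω => OM ω = 1 ∧ A ω = a ∧ M ω = m ∧ OY ω = 1) := by
      have e : Pr p (fun ω => OM ω = 1 ∧ A ω = a ∧ M ω = m ∧ OY ω = 1)
          = Pr p (fun ω => M ω = m ∧ A ω = a ∧ OY ω = 1 ∧ OM ω = 1) :=
        Pr_congr p fun ω => by tauto
      rw [e]; exact h4
    have h3 : 0 < Pr p (fun ω => A ω = a ∧ M ω = m ∧ OY ω = 1) :=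
      lt_of_lt_of_le h4 (Pr_mono p hp0 fun ω h => ⟨h.2.1, h.1, h.2.2.1⟩)
    have hOY3 : 0 < Pr p (fun ω => OY ω = 1 ∧ A ω = a ∧ M ω = m) :=
      lt_of_lt_of_le h4 (Pr_mono p hp0 fun ω h => ⟨h.2.2.1, h.2.1, h.1⟩)
    have h2 : 0 < Pr p (fun ω => A ω = a ∧ M ω = m) :=
      lt_of_lt_of_le h4 (Pr_mono p hp0 fun ω h => ⟨h.2.1, h.1⟩)
    have step1 : CExp p Y (fun ω => OY ω = 1 ∧ A ω = a ∧ M ω = m)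
        = CExp p Y (fun ω => A ω = a ∧ M ω = m) := by
      refine cexp_trans p Y hOY3 h2 ?_
      refine key_factor p Y (fun y => ?_)
      have e1 : Pr p (fun ω => Y ω = y ∧ OY ω = 1 ∧ A ω = a ∧ M ω = m)
          = Pr p (fun ω => OY ω = 1 ∧ Y ω = y ∧ A ω = a ∧ M ω = m) :=
        Pr_congr p fun ω => by tauto
      rw [e1]
      exact hCI1 1 y a m
    have step2 : CExp p Y (fun ω => OM ω = 1 ∧ A ω = a ∧ M ω = m ∧ OY ω = 1)
        = CExp p Y (fun ω => A ω = a ∧ M ω = m ∧ OY ω = 1) := by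
      refine cexp_trans p Y hOM4 h3 ?_
      refine key_factor p Y (fun y => ?_)
      have e1 : Pr p (fun ω => Y ω = y ∧ OM ω = 1 ∧ A ω = a ∧ M ω = m ∧ OY ω = 1)
          = Pr p (fun ω => OM ω = 1 ∧ Y ω = y ∧ A ω = a ∧ M ω = m ∧ OY ω = 1) :=
        Pr_congr p fun ω => by tauto
      rw [e1]
      exact hCI3 1 1 y a m
    have cexp_eq : CExp p Y (fun ω => M ω = m ∧ A ω = a ∧ OY ω = 1 ∧ OM ω = 1)
        = CExp p Y (fun ω => A ω = a ∧ M ω = m) := by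
      calc CExp p Y (fun ω => M ω = m ∧ A ω = a ∧ OY ω = 1 ∧ OM ω = 1)
          = CExp p Y (fun ω => OM ω = 1 ∧ A ω = a ∧ M ω = m ∧ OY ω = 1) :=
            CExp_congr p Y fun ω => by tauto
        _ = CExp p Y (fun ω => A ω = a ∧ M ω = m ∧ OY ω = 1) := step2
        _ = CExp p Y (fun ω => OY ω = 1 ∧ A ω = a ∧ M ω = m) :=
            CExp_congr p Y fun ω => by tauto
        _ = CExp p Y (fun ω => A ω = a ∧ M ω = m) := step1
    have cpr_eq : CPr p (fun ω => M ω = m) (fun ω => A ω = a ∧ OM ω = 1)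
        = Pr p (fun ω => M ω = m ∧ A ω = a) / Pr p (fun ω => A ω = a) := by
      unfold CPr
      have enum : Pr p (fun ω => M ω = m ∧ A ω = a ∧ OM ω = 1)
          = Pr p (fun ω => OM ω = 1 ∧ M ω = m ∧ A ω = a) := Pr_congr p fun ω => by tauto
      have eden : Pr p (fun ω => A ω = a ∧ OM ω = 1)
          = Pr p (fun ω => OM ω = 1 ∧ A ω = a) := Pr_congr p fun ω => by tauto
      rw [enum, eden, div_eq_div_iff hOMA.ne' hA.ne', hCI2 1 m a]
      ring
    rw [cpr_eq, cexp_eq]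
    unfold CExp
    have eMA : Pr p (fun ω => M ω = m ∧ A ω = a)
        = Pr p (fun ω => A ω = a ∧ M ω = m) := Pr_congr p fun ω => by tauto
    rw [eMA]
    field_simp
  calc CExp p Y (fun ω => A ω = a)
      = (∑ ω, if A ω = a then p ω * Y ω else 0) / Pr p (fun ω => A ω = a) := rfl
    _ = (∑ m, ∑ ω, if A ω = a ∧ M ω = m then p ω * Y ω else 0) /
          Pr p (fun ω => A ω = a) := by
        rw [partition M (fun ω => p ω * Y ω) (fun ω => A ω = a)]
    _ = ∑ m, (∑ ω, if A ω = a ∧ M ω = m then p ω * Y ω else 0) /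
          Pr p (fun ω => A ω = a) := by rw [Finset.sum_div]
    _ = ∑ m : 𝓜,
          CPr p (fun ω => M ω = m) (fun ω => A ω = a ∧ OM ω = 1) *
            CExp p Y (fun ω => M ω = m ∧ A ω = a ∧ OY ω = 1 ∧ OM ω = 1) :=
        Finset.sum_congr rfl fun m _ => (key m).symm
end

section
/- Divergence decomposition for bandits: let ν = (P_1, ..., P_k) and ν' = (P'_1, ..., P'_k) be two k-armed bandit environments with per-arm observation distributions, and fix a policy π interacting for n rounds. Then KL(P_ν, P_ν') = Σ_{i=1}^k E_ν[T_i(n)] · KL(P_i, P'_i), where P_ν, P_ν' are the induced measures on interaction histories and T_i(n) is the number of pulls of arm i. -/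
open scoped BigOperators Classical

/-- The probability that a policy `π` interacting with arm-observation distributions `q`
produces the length-`n` interaction history `h` (a sequence of action/observation pairs). -/
noncomputable def histProb {𝓧 : Type*} [Fintype 𝓧] {k : ℕ}
    (π : List (Fin k × 𝓧) → Fin k → ℝ) (q : Fin k → 𝓧 → ℝ)
    {n : ℕ} (h : Fin n → Fin k × 𝓧) : ℝ :=
  ∏ t : Fin n, π ((List.ofFn h).take t) (h t).1 * q (h t).1 (h t).2

/-- Number of pulls of arm `i` in the history `h`. -/
def pulls {𝓧 : Type*} {k : ℕ} {n : ℕ} (i : Fin k) (h : Fin n → Fin k × 𝓧) : ℕ :=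
  (Finset.univ.filter (fun t : Fin n => (h t).1 = i)).card

/-- Kullback–Leibler divergence between two discrete distributions (with the
convention `0 · log(0/·) = 0`). -/
noncomputable def discKL {α : Type*} [Fintype α] (w v : α → ℝ) : ℝ :=
  ∑ a, if w a = 0 then 0 else w a * Real.log (w a / v a)

/- ### Auxiliary lemmas -/

private lemma sum_snoc_aux {β : Type*} [Fintype β] {n : ℕ} (F : (Fin (n+1) → β) → ℝ) :
    ∑ h : Fin (n+1) → β, F h = ∑ h₀ : Fin n → β, ∑ y : β, F (Fin.snoc h₀ y) := by
  rw [← (Fin.snocEquiv (fun _ => β)).sum_comp F, Fintype.sum_prod_type]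
  rw [Finset.sum_comm]
  simp [Fin.snocEquiv]

private lemma histProb_snoc {𝓧 : Type*} [Fintype 𝓧] {k : ℕ}
    (π : List (Fin k × 𝓧) → Fin k → ℝ) (q : Fin k → 𝓧 → ℝ)
    {n : ℕ} (h₀ : Fin n → Fin k × 𝓧) (y : Fin k × 𝓧) :
    histProb π q (Fin.snoc h₀ y) =
      histProb π q h₀ * (π (List.ofFn h₀) y.1 * q y.1 y.2) := by
  unfold histProb
  have hofn : List.ofFn (Fin.snoc h₀ y : Fin (n+1) → Fin k × 𝓧) = List.ofFn h₀ ++ [y] := by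
    rw [List.ofFn_succ']; simp [List.concat_eq_append]
  rw [Fin.prod_univ_castSucc]
  congr 1
  · apply Finset.prod_congr rfl
    intro t _
    rw [hofn, Fin.snoc_castSucc, List.take_append_of_le_length
      (by rw [List.length_ofFn]; exact t.isLt.le), Fin.coe_castSucc]
  · rw [hofn, Fin.snoc_last]
    congr 1
    rw [show ((Fin.last n : Fin (n+1)) : ℕ) = (List.ofFn h₀).length by simp]
    rw [List.take_append_of_le_length le_rfl, List.take_length]

private lemma step_mass {𝓧 : Type*} [Fintype 𝓧] {k : ℕ}
    (π : List (Fin k × 𝓧) → Fin k → ℝ) (q : Fin k → 𝓧 → ℝ)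
    (hπ1 : ∀ l, ∑ i : Fin k, π l i = 1) (hq1 : ∀ i, ∑ x : 𝓧, q i x = 1)
    (l : List (Fin k × 𝓧)) :
    ∑ y : Fin k × 𝓧, π l y.1 * q y.1 y.2 = 1 := by
  rw [Fintype.sum_prod_type]
  simp_rw [← Finset.mul_sum]
  simp [hq1, hπ1 l]

/-- Conditional expectation step: the expectation of `f (h t)` equals the expectation of the
conditional mean of `f` given the action at time `t`. -/
private lemma cond_exp {𝓧 : Type*} [Fintype 𝓧] {k : ℕ}
    (π : List (Fin k × 𝓧) → Fin k → ℝ) (q : Fin k → 𝓧 → ℝ)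
    (hπ1 : ∀ l, ∑ i : Fin k, π l i = 1) (hq1 : ∀ i, ∑ x : 𝓧, q i x = 1) :
    ∀ (n : ℕ) (f : Fin k × 𝓧 → ℝ) (t : Fin n),
      ∑ h : Fin n → Fin k × 𝓧, histProb π q h * f (h t)
        = ∑ h : Fin n → Fin k × 𝓧,
            histProb π q h * ∑ x : 𝓧, q (h t).1 x * f ((h t).1, x) := by
  intro n
  induction n with
  | zero => intro f t; exact absurd t.isLt (by omega)
  | succ m ih =>
    intro f t
    rw [sum_snoc_aux, sum_snoc_aux]
    refine Fin.lastCases ?_ ?_ t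
    · -- t = last m
      apply Finset.sum_congr rfl
      intro h₀ _
      simp_rw [histProb_snoc, Fin.snoc_last]
      rw [Fintype.sum_prod_type, Fintype.sum_prod_type]
      apply Finset.sum_congr rfl
      intro a _
      have hmass : ∑ x : 𝓧, histProb π q h₀ * (π (List.ofFn h₀) a * q a x)
          = histProb π q h₀ * π (List.ofFn h₀) a := by
        simp_rw [← mul_assoc, ← Finset.mul_sum, hq1 a, mul_one]
      calc ∑ x : 𝓧, histProb π q h₀ * (π (List.ofFn h₀) a * q a x) * f (a, x)
          = histProb π q h₀ * π (List.ofFn h₀) a * ∑ x : 𝓧, q a x * f (a, x) := by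
            rw [Finset.mul_sum]
            apply Finset.sum_congr rfl
            intro x _
            ring
        _ = ∑ x : 𝓧, histProb π q h₀ * (π (List.ofFn h₀) a * q a x) *
              ∑ x' : 𝓧, q a x' * f (a, x') := by
            rw [← Finset.sum_mul, hmass]
    · -- t = castSucc s
      intro s
      have key : ∀ g : Fin k × 𝓧 → ℝ,
          ∑ h₀ : Fin m → Fin k × 𝓧, ∑ y : Fin k × 𝓧,
              histProb π q (Fin.snoc h₀ y) * g ((Fin.snoc h₀ y : Fin (m+1) → _) s.castSucc)
            = ∑ h₀ : Fin m → Fin k × 𝓧, histProb π q h₀ * g (h₀ s) := by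
        intro g
        apply Finset.sum_congr rfl
        intro h₀ _
        simp_rw [histProb_snoc, Fin.snoc_castSucc]
        rw [← Finset.sum_mul, ← Finset.mul_sum, step_mass π q hπ1 hq1, mul_one]
      rw [key f, key (fun y => ∑ x : 𝓧, q y.1 x * f (y.1, x)), ih f s]

/- ### Main theorem -/

/-- **Divergence decomposition for bandits.** For two `k`-armed bandit environments
`q, q'` with `q i ≪ q' i` for every arm, and any policy `π` interacting for `n` rounds,
the KL divergence between the induced history measures decomposes as
`KL(P_ν, P_ν') = Σ_i E_ν[T_i(n)] · KL(P_i, P'_i)`. -/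
theorem divergence_decomposition
    {𝓧 : Type*} [Fintype 𝓧] (k n : ℕ)
    (π : List (Fin k × 𝓧) → Fin k → ℝ)
    (hπ0 : ∀ l i, 0 ≤ π l i) (hπ1 : ∀ l, ∑ i : Fin k, π l i = 1)
    (q q' : Fin k → 𝓧 → ℝ)
    (hq0 : ∀ i x, 0 ≤ q i x) (hq1 : ∀ i, ∑ x : 𝓧, q i x = 1)
    (hq'0 : ∀ i x, 0 ≤ q' i x) (hq'1 : ∀ i, ∑ x : 𝓧, q' i x = 1)
    -- absolute continuity P_i ≪ P'_i
    (hac : ∀ i x, q' i x = 0 → q i x = 0) :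
    discKL (fun h : Fin n → Fin k × 𝓧 => histProb π q h)
        (fun h : Fin n → Fin k × 𝓧 => histProb π q' h)
      = ∑ i : Fin k,
          (∑ h : Fin n → Fin k × 𝓧, histProb π q h * (pulls i h : ℝ)) *
            discKL (q i) (q' i) := by
  classical
  set G : Fin k × 𝓧 → ℝ :=
    fun y => if q y.1 y.2 = 0 then 0 else Real.log (q y.1 y.2 / q' y.1 y.2) with hG
  -- Step 1: pointwise log decomposition
  have pointwise : ∀ h : Fin n → Fin k × 𝓧,
      (if histProb π q h = 0 then 0
        else histProb π q h * Real.log (histProb π q h / histProb π q' h))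
      = histProb π q h * ∑ t : Fin n, G (h t) := by
    intro h
    by_cases hP : histProb π q h = 0
    · simp [hP]
    · rw [if_neg hP]
      congr 1
      have hfac : ∀ t : Fin n,
          π ((List.ofFn h).take t) (h t).1 * q (h t).1 (h t).2 ≠ 0 := by
        intro t
        exact Finset.prod_ne_zero_iff.mp hP t (Finset.mem_univ t)
      have hπne : ∀ t : Fin n, π ((List.ofFn h).take t) (h t).1 ≠ 0 :=
        fun t => left_ne_zero_of_mul (hfac t)
      have hqne : ∀ t : Fin n, q (h t).1 (h t).2 ≠ 0 :=
        fun t => right_ne_zero_of_mul (hfac t)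
      have hq'ne : ∀ t : Fin n, q' (h t).1 (h t).2 ≠ 0 := by
        intro t hz
        exact hqne t (hac _ _ hz)
      have hratio : histProb π q h / histProb π q' h
          = ∏ t : Fin n, q (h t).1 (h t).2 / q' (h t).1 (h t).2 := by
        unfold histProb
        rw [← Finset.prod_div_distrib]
        apply Finset.prod_congr rfl
        intro t _
        rw [mul_div_mul_left _ _ (hπne t)]
      rw [hratio, Real.log_prod (fun t _ => div_ne_zero (hqne t) (hq'ne t))]
      apply Finset.sum_congr rfl
      intro t _
      rw [hG]
      simp only [if_neg (hqne t)]
  -- Step 2: rewrite LHS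
  have lhs_eq : discKL (fun h : Fin n → Fin k × 𝓧 => histProb π q h)
        (fun h : Fin n → Fin k × 𝓧 => histProb π q' h)
      = ∑ t : Fin n, ∑ h : Fin n → Fin k × 𝓧, histProb π q h * G (h t) := by
    unfold discKL
    rw [Finset.sum_comm]
    apply Finset.sum_congr rfl
    intro h _
    rw [pointwise h, Finset.mul_sum]
  rw [lhs_eq]
  -- Step 3: apply conditional expectation at each time t
  have condG : ∀ a : Fin k, ∑ x : 𝓧, q a x * G (a, x) = discKL (q a) (q' a) := by
    intro a
    unfold discKL
    apply Finset.sum_congr rfl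
    intro x _
    rw [hG]
    by_cases hz : q a x = 0 <;> simp [hz]
  have step3 : ∀ t : Fin n,
      ∑ h : Fin n → Fin k × 𝓧, histProb π q h * G (h t)
        = ∑ h : Fin n → Fin k × 𝓧, histProb π q h * discKL (q (h t).1) (q' (h t).1) := by
    intro t
    rw [cond_exp π q hπ1 hq1 n G t]
    apply Finset.sum_congr rfl
    intro h _
    rw [condG]
  -- Step 4: rewrite RHS via pulls as a sum of indicators
  have rhs_eq : ∑ i : Fin k,
        (∑ h : Fin n → Fin k × 𝓧, histProb π q h * (pulls i h : ℝ)) * discKL (q i) (q' i)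
      = ∑ t : Fin n, ∑ h : Fin n → Fin k × 𝓧,
          histProb π q h * discKL (q (h t).1) (q' (h t).1) := by
    have hpulls : ∀ (i : Fin k) (h : Fin n → Fin k × 𝓧),
        (pulls i h : ℝ) = ∑ t : Fin n, if (h t).1 = i then (1:ℝ) else 0 := by
      intro i h
      unfold pulls
      rw [Finset.card_filter]
      push_cast
      rfl
    calc ∑ i : Fin k,
          (∑ h : Fin n → Fin k × 𝓧, histProb π q h * (pulls i h : ℝ)) * discKL (q i) (q' i)
        = ∑ i : Fin k, ∑ h : Fin n → Fin k × 𝓧, ∑ t : Fin n,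
            histProb π q h * ((if (h t).1 = i then (1:ℝ) else 0) * discKL (q i) (q' i)) := by
          apply Finset.sum_congr rfl
          intro i _
          rw [Finset.sum_mul]
          apply Finset.sum_congr rfl
          intro h _
          rw [hpulls i h, Finset.mul_sum, Finset.sum_mul]
          apply Finset.sum_congr rfl
          intro t _
          ring
      _ = ∑ t : Fin n, ∑ h : Fin n → Fin k × 𝓧, ∑ i : Fin k,
            histProb π q h * ((if (h t).1 = i then (1:ℝ) else 0) * discKL (q i) (q' i)) := by
          rw [Finset.sum_comm]
          rw [show (∑ h : Fin n → Fin k × 𝓧, ∑ i : Fin k, ∑ t : Fin n,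
                histProb π q h * ((if (h t).1 = i then (1:ℝ) else 0) * discKL (q i) (q' i)))
              = ∑ h : Fin n → Fin k × 𝓧, ∑ t : Fin n, ∑ i : Fin k,
                histProb π q h * ((if (h t).1 = i then (1:ℝ) else 0) * discKL (q i) (q' i))
            from Finset.sum_congr rfl fun h _ => Finset.sum_comm]
          rw [Finset.sum_comm]
      _ = ∑ t : Fin n, ∑ h : Fin n → Fin k × 𝓧,
            histProb π q h * discKL (q (h t).1) (q' (h t).1) := by
          apply Finset.sum_congr rfl
          intro t _
          apply Finset.sum_congr rfl
          intro h _
          rw [← Finset.mul_sum]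
          congr 1
          simp [ite_mul]
  rw [rhs_eq]
  exact Finset.sum_congr rfl (fun t _ => step3 t)
end

section
/- Mixture KL under MAR structure: suppose under both environments M has distribution (p_m) with P(O=1 | M=m) = γ_m, O ⟂ Y | M, and given M=m, Y ~ N(0,1) in environment 0 and Y ~ N(Δ_m, 1) in environment 1, where Δ_m = Δ/(P γ_m) with P = Σ_m p_m/γ_m. Then the KL divergence between the laws of the observed tuple (M, O, Y·1{O=1}) in the two environments equals Σ_m p_m γ_m Δ_m²/2 = Δ²/(2P). -/
open MeasureTheory ProbabilityTheory

/-- Kullback–Leibler divergence `∫ log (dP/dQ) dP` between two measures. -/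
noncomputable def klDivergence {Ω : Type*} [MeasurableSpace Ω] (P Q : Measure Ω) : ℝ :=
  ∫ ω, Real.log (P.rnDeriv Q ω).toReal ∂P

/-- The law of the observed tuple `(M, O, Y·1{O=1})` in a MAR environment: the mediator
`M = m` has probability `p m`, the reward is observed (`O = 1`) with probability `γ m`
given `M = m`, with `O ⟂ Y | M`, and given `M = m` the reward `Y` is `N(mean m, 1)`;
when `O = 0` the observed value is `0`. -/
noncomputable def marLaw {K : ℕ} (p γ mean : Fin K → ℝ) : Measure (Fin K × Bool × ℝ) :=
  ∑ m : Fin K, (ENNReal.ofReal (p m)) •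
    ((Measure.dirac m).prod
      ((ENNReal.ofReal (γ m)) • ((Measure.dirac true).prod (gaussianReal (mean m) 1))
        + (ENNReal.ofReal (1 - γ m)) •
            ((Measure.dirac false).prod (Measure.dirac (0 : ℝ)))))

section MyHelpers
open Real
open scoped ENNReal NNReal

lemma myWithDensity_map {α β : Type*} [MeasurableSpace α] [MeasurableSpace β]
    {g : α → β} (hg : MeasurableEmbedding g) (μ : Measure α) {f : β → ℝ≥0∞}
    (hf : Measurable f) :
    (μ.map g).withDensity f = (μ.withDensity (fun a => f (g a))).map g := by
  ext s hs
  rw [withDensity_apply _ hs, Measure.map_apply hg.measurable hs,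
    withDensity_apply _ (hg.measurable hs), setLIntegral_map hs hf hg.measurable]

lemma myGaussShift (Δ : ℝ) :
    gaussianReal 0 1 = (gaussianReal Δ 1).withDensity
      (fun y => ENNReal.ofReal (Real.exp (Δ^2/2 - Δ*y))) := by
  have hm : Measurable (fun y => ENNReal.ofReal (Real.exp (Δ^2/2 - Δ*y))) :=
    ENNReal.measurable_ofReal.comp (Real.measurable_exp.comp
      (measurable_const.sub (measurable_id.const_mul Δ)))
  rw [gaussianReal_of_var_ne_zero _ one_ne_zero, gaussianReal_of_var_ne_zero _ one_ne_zero,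
    ← withDensity_mul _ (measurable_gaussianPDF _ _) hm]
  congr 1
  funext y
  simp only [gaussianPDF, Pi.mul_apply]
  rw [← ENNReal.ofReal_mul (gaussianPDFReal_nonneg _ _ _)]
  congr 1
  simp only [gaussianPDFReal, NNReal.coe_one, mul_one, sub_zero]
  rw [mul_assoc, ← Real.exp_add]
  congr 1
  ring

lemma myIsFiniteSmul {α : Type*} [MeasurableSpace α] (μ : Measure α) [IsFiniteMeasure μ]
    {c : ℝ≥0∞} (hc : c ≠ ⊤) : IsFiniteMeasure (c • μ) :=
  ⟨by rw [Measure.smul_apply, smul_eq_mul]; exact ENNReal.mul_lt_top hc.lt_top (measure_lt_top μ _)⟩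

lemma myIsFiniteSum {ι α : Type*} [MeasurableSpace α] (s : Finset ι) (μ : ι → Measure α)
    (h : ∀ i ∈ s, IsFiniteMeasure (μ i)) : IsFiniteMeasure (∑ i ∈ s, μ i) :=
  ⟨by rw [Measure.finset_sum_apply]
      exact ENNReal.sum_lt_top.2 fun i hi => (h i hi).measure_univ_lt_top⟩

lemma myOddZero {b : ℝ} : ∫ x : ℝ, x * Real.exp (-b * x^2) = 0 := by
  have h := (Measure.measurePreserving_neg (volume : Measure ℝ)).integral_comp
    measurableEmbedding_neg (fun x : ℝ => x * Real.exp (-b * x^2))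
  simp only [neg_sq, neg_mul, integral_neg] at h
  simp only [neg_mul] at h ⊢
  linarith

lemma myIntegrableId : Integrable (fun y : ℝ => y) (gaussianReal 0 1) := by
  rw [gaussianReal_of_var_ne_zero _ one_ne_zero]
  have hmeas : Measurable fun y : ℝ => (gaussianPDFReal 0 1 y).toNNReal :=
    (measurable_gaussianPDFReal 0 1).real_toNNReal
  have : Integrable (fun y : ℝ => (gaussianPDFReal 0 1 y).toNNReal • y) volume := by
    have base : Integrable (fun y : ℝ => (√(2 * π))⁻¹ * (y * Real.exp (-(1/2) * y^2))) volume :=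
      (integrable_mul_exp_neg_mul_sq (by norm_num : (0:ℝ) < 1/2)).const_mul _
    refine base.congr (Filter.Eventually.of_forall fun y => ?_)
    simp only [smul_eq_mul, NNReal.smul_def, Real.coe_toNNReal _ (gaussianPDFReal_nonneg 0 1 y)]
    simp only [gaussianPDFReal, NNReal.coe_one, mul_one, sub_zero]
    rw [show -y^2/2 = -(1/2) * y^2 by ring]
    ring
  exact (integrable_withDensity_iff_integrable_smul hmeas).2 this

lemma myIntegralId : ∫ y, y ∂(gaussianReal 0 1) = 0 := by
  rw [gaussianReal_of_var_ne_zero _ one_ne_zero]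
  have hmeas : Measurable fun y : ℝ => (gaussianPDFReal 0 1 y).toNNReal :=
    (measurable_gaussianPDFReal 0 1).real_toNNReal
  rw [show (gaussianPDF 0 1) = (fun y => ((fun y : ℝ => (gaussianPDFReal 0 1 y).toNNReal) y : ℝ≥0∞)) from rfl,
    integral_withDensity_eq_integral_smul hmeas]
  have : (fun y : ℝ => (gaussianPDFReal 0 1 y).toNNReal • y)
      = fun y : ℝ => (√(2 * π))⁻¹ * (y * Real.exp (-(1/2) * y^2)) := by
    funext y
    simp only [smul_eq_mul, NNReal.smul_def, Real.coe_toNNReal _ (gaussianPDFReal_nonneg 0 1 y)]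
    simp only [gaussianPDFReal, NNReal.coe_one, mul_one, sub_zero]
    rw [show -y^2/2 = -(1/2) * y^2 by ring]
    ring
  rw [this, integral_const_mul, myOddZero, mul_zero]

lemma myIntegrableLin (a b : ℝ) : Integrable (fun y : ℝ => a - b * y) (gaussianReal 0 1) :=
  (integrable_const a).sub (myIntegrableId.const_mul b)

lemma myIntegralLin (a b : ℝ) : ∫ y, (a - b * y) ∂(gaussianReal 0 1) = a := by
  rw [integral_sub (integrable_const a) (myIntegrableId.const_mul b), integral_const,
    integral_const_mul, myIntegralId]
  simp

noncomputable def myF {K : ℕ} (D : Fin K → ℝ) : Fin K × Bool × ℝ → ℝ≥0∞ :=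
  fun x => if x.2.1 then ENNReal.ofReal (Real.exp ((D x.1)^2/2 - D x.1 * x.2.2)) else 1

noncomputable def myG {K : ℕ} (D : Fin K → ℝ) : Fin K × Bool × ℝ → ℝ :=
  fun x => if x.2.1 then (D x.1)^2/2 - D x.1 * x.2.2 else 0

lemma myF_meas {K : ℕ} (D : Fin K → ℝ) : Measurable (myF D) := by
  have h1 : Measurable fun x : Fin K × Bool × ℝ => (D x.1)^2/2 :=
    (measurable_of_countable (fun m : Fin K => (D m)^2/2)).comp measurable_fst
  have h2 : Measurable fun x : Fin K × Bool × ℝ => D x.1 :=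
    (measurable_of_countable (fun m : Fin K => D m)).comp measurable_fst
  have h3 : Measurable fun x : Fin K × Bool × ℝ => x.2.2 :=
    measurable_snd.comp measurable_snd
  have h4 : Measurable fun x : Fin K × Bool × ℝ => (D x.1)^2/2 - D x.1 * x.2.2 :=
    h1.sub (h2.mul h3)
  apply Measurable.ite
  · exact (measurable_fst.comp measurable_snd) (measurableSet_singleton true)
  · exact ENNReal.measurable_ofReal.comp (Real.measurable_exp.comp h4)
  · exact measurable_const

lemma myLogF {K : ℕ} (D : Fin K → ℝ) (x : Fin K × Bool × ℝ) :
    Real.log ((myF D x).toReal) = myG D x := by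
  rcases x with ⟨m, b, y⟩
  cases b
  · simp [myF, myG]
  · simp [myF, myG, ENNReal.toReal_ofReal (Real.exp_nonneg _), Real.log_exp]

lemma myKey {K : ℕ} (p γ : Fin K → ℝ) (D : Fin K → ℝ) :
    marLaw p γ (fun _ => 0) = (marLaw p γ D).withDensity (myF D) := by
  simp only [marLaw]
  conv_rhs => rw [← Measure.sum_fintype, withDensity_sum, Measure.sum_fintype]
  refine Finset.sum_congr rfl fun m _ => ?_
  rw [withDensity_smul_measure]
  congr 1
  conv_rhs => rw [Measure.dirac_prod,
    myWithDensity_map (measurableEmbedding_prodMk_left m) _ (myF_meas D)]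
  conv_lhs => rw [Measure.dirac_prod]
  congr 1
  rw [withDensity_add_measure, withDensity_smul_measure, withDensity_smul_measure]
  have hc : Measurable fun a : Bool × ℝ => myF D (m, a) :=
    (myF_meas D).comp measurable_prodMk_left
  congr 1
  · congr 1
    conv_rhs => rw [Measure.dirac_prod,
      myWithDensity_map (measurableEmbedding_prodMk_left true) _ hc]
    conv_lhs => rw [Measure.dirac_prod]
    congr 1
    rw [myGaussShift (D m)]
    congr 1
  · congr 1
    conv_rhs => rw [Measure.dirac_prod,
      myWithDensity_map (measurableEmbedding_prodMk_left false) _ hc]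
    conv_lhs => rw [Measure.dirac_prod]
    congr 1
    have h1 : (fun y : ℝ => myF D (m, false, y)) = 1 := by
      funext y; simp [myF]
    rw [h1, withDensity_one]

lemma myFinite {K : ℕ} (p γ mean : Fin K → ℝ) : IsFiniteMeasure (marLaw p γ mean) := by
  constructor
  simp only [marLaw, Measure.finset_sum_apply, Measure.smul_apply, smul_eq_mul]
  refine ENNReal.sum_lt_top.2 fun m _ => ENNReal.mul_lt_top ENNReal.ofReal_lt_top ?_
  rw [← Set.univ_prod_univ, Measure.prod_prod]
  refine ENNReal.mul_lt_top (measure_lt_top _ _) ?_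
  rw [Measure.add_apply, Measure.smul_apply, Measure.smul_apply, smul_eq_mul, smul_eq_mul]
  exact ENNReal.add_lt_top.2
    ⟨ENNReal.mul_lt_top ENNReal.ofReal_lt_top (measure_lt_top _ _),
     ENNReal.mul_lt_top ENNReal.ofReal_lt_top (measure_lt_top _ _)⟩

lemma myIntTrue {K : ℕ} (D : Fin K → ℝ) (m : Fin K) :
    Integrable (fun z : Bool × ℝ => myG D (m, z))
      ((Measure.dirac true).prod (gaussianReal 0 1)) := by
  rw [Measure.dirac_prod, (measurableEmbedding_prodMk_left true).integrable_map_iff]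
  exact (myIntegrableLin ((D m)^2/2) (D m)).congr
    (Filter.Eventually.of_forall fun y => by simp [myG])

lemma myIntFalse {K : ℕ} (D : Fin K → ℝ) (m : Fin K) :
    Integrable (fun z : Bool × ℝ => myG D (m, z))
      ((Measure.dirac false).prod (Measure.dirac (0:ℝ))) := by
  rw [Measure.dirac_prod, (measurableEmbedding_prodMk_left false).integrable_map_iff]
  exact (integrable_zero _ _ _).congr (Filter.Eventually.of_forall fun y => by simp [myG])

lemma myIntegrableG {K : ℕ} (D : Fin K → ℝ) (m : Fin K) {g0 g1 : ℝ≥0∞}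
    (hg0 : g0 ≠ ⊤) (hg1 : g1 ≠ ⊤) :
    Integrable (fun z : Bool × ℝ => myG D (m, z))
      (g1 • ((Measure.dirac true).prod (gaussianReal 0 1))
        + g0 • ((Measure.dirac false).prod (Measure.dirac (0:ℝ)))) :=
  ((myIntTrue D m).smul_measure hg1).add_measure ((myIntFalse D m).smul_measure hg0)

lemma myIntegralG {K : ℕ} (D : Fin K → ℝ) (m : Fin K) {γm : ℝ} (hγ0 : 0 ≤ γm) (hγ1 : γm ≤ 1) :
    ∫ z, myG D (m, z)
      ∂(ENNReal.ofReal γm • ((Measure.dirac true).prod (gaussianReal 0 1))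
        + ENNReal.ofReal (1 - γm) • ((Measure.dirac false).prod (Measure.dirac (0:ℝ))))
      = γm * ((D m)^2/2) := by
  rw [integral_add_measure ((myIntTrue D m).smul_measure ENNReal.ofReal_ne_top)
    ((myIntFalse D m).smul_measure ENNReal.ofReal_ne_top),
    integral_smul_measure, integral_smul_measure,
    Measure.dirac_prod, Measure.dirac_prod,
    (measurableEmbedding_prodMk_left true).integral_map,
    (measurableEmbedding_prodMk_left false).integral_map]
  have h1 : (fun y : ℝ => myG D (m, (true, y))) = fun y => (D m)^2/2 - D m * y := by
    funext y; simp [myG]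
  rw [h1, myIntegralLin, integral_dirac]
  simp [myG, ENNReal.toReal_ofReal hγ0]

end MyHelpers

/-- **Mixture KL under the MAR structure.** With `Δ_m = Δ/(P γ_m)` and
`P = Σ_m p_m/γ_m`, the KL divergence between the laws of the observed tuple
`(M, O, Y·1{O=1})` in environment 0 (all Gaussian means `0`) and environment 1
(means `Δ_m`) equals `Σ_m p_m γ_m Δ_m²/2 = Δ²/(2P)`. -/
theorem mixture_kl_mar {K : ℕ} (p γ : Fin K → ℝ) (Δ : ℝ)
    (hppos : ∀ m, 0 < p m) (hpsum : ∑ m, p m = 1)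
    (hγpos : ∀ m, 0 < γ m) (hγle : ∀ m, γ m ≤ 1) :
    klDivergence (marLaw p γ (fun _ => 0))
        (marLaw p γ (fun m => Δ / ((∑ m' : Fin K, p m' / γ m') * γ m)))
      = ∑ m : Fin K, p m * γ m * (Δ / ((∑ m' : Fin K, p m' / γ m') * γ m)) ^ 2 / 2
    ∧ ∑ m : Fin K, p m * γ m * (Δ / ((∑ m' : Fin K, p m' / γ m') * γ m)) ^ 2 / 2
        = Δ ^ 2 / (2 * ∑ m' : Fin K, p m' / γ m') := by
  have hK : Nonempty (Fin K) := by
    rcases Nat.eq_zero_or_pos K with h | h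
    · subst h; simp at hpsum
    · exact ⟨⟨0, h⟩⟩
  set Pv : ℝ := ∑ m' : Fin K, p m' / γ m' with hPv
  have hPvpos : 0 < Pv :=
    Finset.sum_pos (fun m _ => div_pos (hppos m) (hγpos m)) Finset.univ_nonempty
  set D : Fin K → ℝ := fun m => Δ / (Pv * γ m) with hD
  have hsum : ∑ m : Fin K, p m * γ m * (Δ / (Pv * γ m)) ^ 2 / 2 = Δ ^ 2 / (2 * Pv) := by
    have hterm : ∀ m : Fin K, p m * γ m * (Δ / (Pv * γ m))^2/2
        = (Δ^2/(2*Pv^2)) * (p m / γ m) := by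
      intro m
      have hγ := (hγpos m).ne'
      have hP := hPvpos.ne'
      field_simp
    rw [Finset.sum_congr rfl fun m _ => hterm m, ← Finset.mul_sum, ← hPv]
    have hP := hPvpos.ne'
    field_simp
  refine ⟨?_, hsum⟩
  haveI : IsFiniteMeasure (marLaw p γ D) := myFinite p γ D
  have hkey := myKey p γ D
  have hae : (marLaw p γ fun _ => 0).rnDeriv (marLaw p γ D) =ᵐ[marLaw p γ D] myF D := by
    rw [hkey]
    exact Measure.rnDeriv_withDensity _ (myF_meas D)
  have hac : (marLaw p γ fun _ => 0) ≪ marLaw p γ D := by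
    rw [hkey]; exact withDensity_absolutelyContinuous _ _
  have hae0 := hae.filter_mono hac.ae_le
  have hunfold : klDivergence (marLaw p γ fun _ => 0) (marLaw p γ D)
      = ∫ ω, Real.log (((marLaw p γ fun _ => 0).rnDeriv (marLaw p γ D) ω)).toReal
          ∂(marLaw p γ fun _ => 0) := rfl
  have hint : ∀ m ∈ (Finset.univ : Finset (Fin K)), Integrable (myG D)
      (ENNReal.ofReal (p m) • ((Measure.dirac m).prod
        (ENNReal.ofReal (γ m) • ((Measure.dirac true).prod (gaussianReal 0 1))
          + ENNReal.ofReal (1 - γ m) • ((Measure.dirac false).prod (Measure.dirac (0:ℝ)))))) := by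
    intro m _
    refine Integrable.smul_measure ?_ ENNReal.ofReal_ne_top
    rw [Measure.dirac_prod, (measurableEmbedding_prodMk_left m).integrable_map_iff]
    exact myIntegrableG D m ENNReal.ofReal_ne_top ENNReal.ofReal_ne_top
  calc klDivergence (marLaw p γ fun _ => 0) (marLaw p γ D)
      = ∫ ω, myG D ω ∂(marLaw p γ fun _ => 0) := by
        rw [hunfold]
        refine integral_congr_ae (hae0.mono fun ω h => ?_)
        dsimp only
        rw [h, myLogF]
    _ = ∑ m : Fin K, p m * (γ m * ((D m)^2/2)) := by
        simp only [marLaw]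
        rw [integral_finset_sum_measure hint]
        refine Finset.sum_congr rfl fun m _ => ?_
        rw [integral_smul_measure, Measure.dirac_prod,
          (measurableEmbedding_prodMk_left m).integral_map,
          myIntegralG D m (hγpos m).le (hγle m)]
        simp [ENNReal.toReal_ofReal (hppos m).le]
    _ = ∑ m : Fin K, p m * γ m * (Δ / (Pv * γ m)) ^ 2 / 2 := by
        refine Finset.sum_congr rfl fun m _ => ?_
        simp only [hD]
        ring
end

section
/- Perturbation bound for linear systems (Theorem 2.2 of Higham): Let Ax = b and (A + ΔA)y = b + Δb with ‖ΔA‖ ≤ ε‖E‖, ‖Δb‖ ≤ ε‖f‖, and ε‖A⁻¹‖‖E‖ < 1, where A is invertible. Then ‖x − y‖/‖x‖ ≤ (ε / (1 − ε‖A⁻¹‖‖E‖)) · ( ‖A⁻¹‖‖f‖/‖x‖ + ‖A⁻¹‖‖E‖ ). -/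
/-- **Perturbation bound for linear systems (Higham, Thm 2.2).** Let `A` be an
invertible linear operator (with inverse `A'`) on a normed space, `A x = b`, and
`(A + ΔA) y = b + Δb` with `‖ΔA‖ ≤ ε·E`, `‖Δb‖ ≤ ε·f` and `ε‖A⁻¹‖E < 1`.  Then
`‖x − y‖/‖x‖ ≤ (ε/(1 − ε‖A⁻¹‖E)) · (‖A⁻¹‖f/‖x‖ + ‖A⁻¹‖E)`. -/
theorem linear_system_perturbation_bound
    {V : Type*} [NormedAddCommGroup V] [NormedSpace ℝ V]
    (A A' ΔA : V →L[ℝ] V)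
    (hinv₁ : A.comp A' = ContinuousLinearMap.id ℝ V)
    (hinv₂ : A'.comp A = ContinuousLinearMap.id ℝ V)
    (x y b Δb : V) (hx : x ≠ 0)
    (hAx : A x = b)
    (hpert : (A + ΔA) y = b + Δb)
    (ε E f : ℝ) (hε : 0 ≤ ε) (hE : 0 ≤ E) (hf : 0 ≤ f)
    (hΔA : ‖ΔA‖ ≤ ε * E) (hΔb : ‖Δb‖ ≤ ε * f)
    (hsmall : ε * ‖A'‖ * E < 1) :
    ‖x - y‖ / ‖x‖
      ≤ (ε / (1 - ε * ‖A'‖ * E)) * (‖A'‖ * f / ‖x‖ + ‖A'‖ * E) := by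
  have hx0 : (0:ℝ) < ‖x‖ := norm_pos_iff.mpr hx
  have hK : (0:ℝ) ≤ ‖A'‖ := norm_nonneg _
  have hδ : (0:ℝ) < 1 - ε * ‖A'‖ * E := by linarith
  have hAsub : A (y - x) = Δb - ΔA y := by
    have h1 : A y + ΔA y = b + Δb := by simpa using hpert
    have h2 : A (y - x) = A y - A x := map_sub A y x
    rw [h2, hAx, sub_eq_sub_iff_add_eq_add, h1, add_comm]
  have hid : ∀ v : V, A' (A v) = v := fun v =>
    congrArg (fun T : V →L[ℝ] V => T v) hinv₂
  have hxy : x - y = A' (ΔA y - Δb) := by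
    have := hid (y - x)
    rw [hAsub] at this
    have : A' (ΔA y - Δb) = -(y - x) := by
      rw [← this, ← map_neg]; congr 1; abel
    rw [this]; abel
  have hb1 : ‖x - y‖ ≤ ‖A'‖ * (‖ΔA‖ * ‖y‖ + ‖Δb‖) := by
    rw [hxy]
    calc ‖A' (ΔA y - Δb)‖ ≤ ‖A'‖ * ‖ΔA y - Δb‖ := A'.le_opNorm _
      _ ≤ ‖A'‖ * (‖ΔA y‖ + ‖Δb‖) := by
          gcongr; exact norm_sub_le _ _
      _ ≤ ‖A'‖ * (‖ΔA‖ * ‖y‖ + ‖Δb‖) := by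
          gcongr; exact ΔA.le_opNorm _
  have hy : ‖y‖ ≤ ‖x‖ + ‖x - y‖ := by
    calc ‖y‖ = ‖x - (x - y)‖ := by congr 1; abel
      _ ≤ ‖x‖ + ‖x - y‖ := norm_sub_le _ _
  have hΔAy : ‖ΔA‖ * ‖y‖ ≤ ε * E * (‖x‖ + ‖x - y‖) := by
    have hy0 : (0:ℝ) ≤ ‖y‖ := norm_nonneg _
    have h3 : ‖ΔA‖ * ‖y‖ ≤ (ε * E) * ‖y‖ := by gcongr
    nlinarith [norm_nonneg (x - y), mul_nonneg hε hE]
  have hmain : ‖x - y‖ * (1 - ε * ‖A'‖ * E)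
      ≤ ε * (‖A'‖ * f + ‖A'‖ * E * ‖x‖) := by
    nlinarith [norm_nonneg (x - y)]
  have h4 : ‖x - y‖ ≤ ε * (‖A'‖ * f + ‖A'‖ * E * ‖x‖) / (1 - ε * ‖A'‖ * E) :=
    (le_div_iff₀ hδ).mpr hmain
  calc ‖x - y‖ / ‖x‖
      ≤ (ε * (‖A'‖ * f + ‖A'‖ * E * ‖x‖) / (1 - ε * ‖A'‖ * E)) / ‖x‖ := by gcongr
    _ = (ε / (1 - ε * ‖A'‖ * E)) * (‖A'‖ * f / ‖x‖ + ‖A'‖ * E) := by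
        field_simp
end
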